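/- arXiv:1806.09888 — 4 statements merged into one kernel-verified Lean document; each statement's English description precedes it below -/
import Mathlib

section
/- Let A ∈ R^{N×nM} have columns a_1,…,a_{nM} of unit ℓ2 norm, each supported on m consecutive coordinates (with cyclic wraparound), and mutual coherence μ. Let x ∈ R^{nM} have support Λ with largest nonzero magnitude |x_max|, and assume that for every i ∈ Λ the set {j ∈ Λ : ⟨a_i, a_j⟩ ≠ 0} has at most S elements. Let v ∈ R^N satisfy ‖v‖_{2,∞}^P ≤ ζ for patch length m. Let D be any (fixed) diagonal sign matrix and set x̂^{(0)} = A D x + v and x̂ = H_{|Λ|}((A D)ᵀ x̂^{(0)}). If supp(x̂) = Λ, then ‖x̂ − x‖_{2,∞}^P ≤ √(‖x̂‖_{0,∞}^P) · ( μ (S − 1) |x_max| + ζ ). -/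
/-- There exists a set of `k` indices within `s` on which `|v|` attains its
`k` largest values over `s`. -/
theorem exists_topk {α : Type*} [DecidableEq α] (s : Finset α) (v : α → ℝ) :
    ∀ k, k ≤ s.card → ∃ T, T ⊆ s ∧ T.card = k ∧
      ∀ i ∈ T, ∀ j ∈ s, j ∉ T → |v j| ≤ |v i| := by
  intro k
  induction k with
  | zero => exact fun _ => ⟨∅, Finset.empty_subset s, Finset.card_empty, by simp⟩
  | succ k ih =>
    intro hk
    obtain ⟨T, hTs, hcard, hT⟩ := ih (Nat.le_of_succ_le hk)
    have hne : (s \ T).Nonempty := by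
      rw [← Finset.card_pos, Finset.card_sdiff_of_subset hTs, hcard]; omega
    obtain ⟨b, hb, hmax⟩ := Finset.exists_max_image (s \ T) (fun j => |v j|) hne
    have hbs := (Finset.mem_sdiff.mp hb).1
    have hbT := (Finset.mem_sdiff.mp hb).2
    refine ⟨insert b T, Finset.insert_subset hbs hTs, ?_, ?_⟩
    · rw [Finset.card_insert_of_notMem hbT, hcard]
    · intro i hi j hjs hj
      have hjT : j ∉ T := fun h => hj (Finset.mem_insert_of_mem h)
      rcases Finset.mem_insert.mp hi with rfl | hiT
      · exact hmax j (Finset.mem_sdiff.mpr ⟨hjs, hjT⟩)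
      · exact hT i hiT j hjs hjT

/-- Hard thresholding `H_k` on the index set `s`: keeps the `k` entries of largest
absolute value (among indices in `s`) and sets all other entries to zero. -/
noncomputable def hardThreshold {α : Type*} [DecidableEq α] (s : Finset α) (k : ℕ)
    (v : α → ℝ) : α → ℝ :=
  fun i => if i ∈ (exists_topk s v (min k s.card) (min_le_right _ _)).choose then v i else 0

/-- `‖x‖_{2,∞}^P` for a vector of dimension `N` (indexed by `0,…,N-1`) and patch
length `m`: the maximum over all starting positions `i < N` of the ℓ2-norm of the
`m` consecutive entries of `x` starting at `i`, with cyclic wraparound. -/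
noncomputable def patchNorm2 (N m : ℕ) (x : ℕ → ℝ) : ℝ :=
  sSup ((fun i => Real.sqrt (∑ j ∈ Finset.range m, x ((i + j) % N) ^ 2)) '' Set.Iio N)

/-- `‖x‖_{0,∞}^P` for a vector of dimension `N` and patch length `m`: the maximum
over all starting positions `i < N` of the number of nonzero entries among the `m`
consecutive entries of `x` starting at `i`, with cyclic wraparound. -/
noncomputable def patchNorm0 (N m : ℕ) (x : ℕ → ℝ) : ℕ :=
  (Finset.range N).sup (fun i => Set.ncard {j | j < m ∧ x ((i + j) % N) ≠ 0})


/-!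
On the support `Λ`, since `D² = I` and `‖a_t‖ = 1`, the estimate satisfies
`x̂_t - x_t = ε_t ∑_{j ≠ t} ε_j x_j ⟨a_t, a_j⟩ + ε_t ⟨a_t, v⟩`. At most `S - 1` of the
interference terms are nonzero and each is at most `μ |x_max|`, while Cauchy–Schwarz on the
patch carrying `a_t` bounds the noise term by `ζ`. Off `Λ` both `x̂` and `x` vanish, so every
patch of `x̂ - x` has at most `‖x̂‖_{0,∞}^P` nonzero entries, each bounded by
`μ (S - 1) |x_max| + ζ`.
-/

open Finset

lemma hardThreshold_eq_of_ne_zero {α : Type*} [DecidableEq α] {s : Finset α} {k : ℕ}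
    {v : α → ℝ} {i : α} (h : hardThreshold s k v i ≠ 0) : hardThreshold s k v i = v i := by
  unfold hardThreshold at h ⊢
  split_ifs at h ⊢
  · rfl
  · exact absurd rfl h

lemma sum_mul_sum_add_eq {ι κ : Type*} (r : Finset ι) (s : Finset κ) (a v : ι → ℝ)
    (c : κ → ℝ) (b : κ → ι → ℝ) :
    ∑ τ ∈ r, a τ * (∑ j ∈ s, c j * b j τ + v τ) =
      ∑ j ∈ s, c j * ∑ τ ∈ r, a τ * b j τ + ∑ τ ∈ r, a τ * v τ := by
  simp only [mul_add, sum_add_distrib, mul_sum]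
  rw [sum_comm]
  congr 1
  exact sum_congr rfl fun _ _ => sum_congr rfl fun _ _ => by ring

section Interference

variable {α : Type*} [DecidableEq α]

lemma abs_sum_erase_mul_le {s Λ : Finset α} {t : α} {c G : α → ℝ} {B μ : ℝ} {S : ℕ}
    (hΛs : Λ ⊆ s) (ht : t ∈ Λ) (hGt : G t ≠ 0) (hμ : 0 ≤ μ)
    (hc0 : ∀ j ∈ s, j ∉ Λ → c j = 0) (hc : ∀ j ∈ Λ, |c j| ≤ B)
    (hG : ∀ j ∈ Λ, j ≠ t → |G j| ≤ μ) (hS : #{j ∈ Λ | G j ≠ 0} ≤ S) :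
    |∑ j ∈ s.erase t, c j * G j| ≤ (S - 1) * (B * μ) := by
  set F := {j ∈ Λ | G j ≠ 0}
  have htF : t ∈ F := mem_filter.mpr ⟨ht, hGt⟩
  have hFs : F.erase t ⊆ s.erase t := erase_subset_erase t ((filter_subset _ _).trans hΛs)
  have hcard : ((F.erase t).card : ℝ) ≤ S - 1 := by
    have := card_erase_add_one htF
    rw [le_sub_iff_add_le]
    exact_mod_cast this ▸ hS
  have hB : 0 ≤ B := (abs_nonneg _).trans (hc t ht)
  rw [← sum_subset hFs fun j hj hjF => ?vanish]
  case vanish =>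
    obtain ⟨hjt, hjs⟩ := mem_erase.mp hj
    by_cases hjΛ : j ∈ Λ
    · have : G j = 0 := by_contra fun h => hjF (mem_erase.mpr ⟨hjt, mem_filter.mpr ⟨hjΛ, h⟩⟩)
      rw [this, mul_zero]
    · rw [hc0 j hjs hjΛ, zero_mul]
  calc |∑ j ∈ F.erase t, c j * G j| ≤ ∑ j ∈ F.erase t, |c j * G j| := abs_sum_le_sum_abs _ _
    _ ≤ (F.erase t).card • (B * μ) := sum_le_card_nsmul _ _ _ fun j hj => by
        obtain ⟨hjt, hjF⟩ := mem_erase.mp hj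
        obtain ⟨hjΛ, -⟩ := mem_filter.mp hjF
        rw [abs_mul]
        exact mul_le_mul (hc j hjΛ) (hG j hjΛ hjt) (abs_nonneg _) hB
    _ ≤ (S - 1) * (B * μ) := by
        rw [nsmul_eq_mul]
        exact mul_le_mul_of_nonneg_right hcard (mul_nonneg hB hμ)

lemma abs_sign_mul_sub_le {s : Finset α} {t : α} (ht : t ∈ s) {e x G : α → ℝ}
    (he : e t = 1 ∨ e t = -1) (hGt : G t = 1) (w : ℝ) :
    |e t * (∑ j ∈ s, e j * x j * G j + w) - x t| ≤
      |∑ j ∈ s.erase t, e j * x j * G j| + |w| := by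
  have hee : e t * e t = 1 := by rcases he with h | h <;> rw [h] <;> norm_num
  have hexp : e t * (∑ j ∈ s, e j * x j * G j + w) - x t =
      e t * (∑ j ∈ s.erase t, e j * x j * G j + w) := by
    rw [← add_sum_erase s _ ht, hGt]
    linear_combination x t * hee
  rw [hexp, abs_mul, show |e t| = 1 by rcases he with h | h <;> simp [h], one_mul]
  exact abs_add_le _ _

end Interference

section Patch

variable {N m : ℕ}

lemma sqrt_sum_patch_le_patchNorm2 (v : ℕ → ℝ) {p : ℕ} (hp : p < N) :
    √(∑ s ∈ range m, v ((p + s) % N) ^ 2) ≤ patchNorm2 N m v :=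
  le_csSup ((Set.finite_Iio N).image _).bddAbove ⟨p, hp, rfl⟩

lemma abs_sum_mul_le_of_support_subset_patch {w v : ℕ → ℝ} {p : ℕ}
    (hw : ∀ τ < N, w τ ≠ 0 → ∃ s < m, τ = (p + s) % N) :
    |∑ τ ∈ range N, w τ * v τ| ≤
      √(∑ τ ∈ range N, w τ ^ 2) * √(∑ s ∈ range m, v ((p + s) % N) ^ 2) := by
  set T := (range N).filter (fun τ => w τ ≠ 0)
  have hT : T ⊆ (range m).image (fun s => (p + s) % N) := by
    intro τ hτ
    obtain ⟨hτN, hwτ⟩ := mem_filter.mp hτ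
    obtain ⟨s, hs, rfl⟩ := hw τ (mem_range.mp hτN) hwτ
    exact mem_image_of_mem _ (mem_range.mpr hs)
  have hvT : ∑ τ ∈ T, v τ ^ 2 ≤ ∑ s ∈ range m, v ((p + s) % N) ^ 2 :=
    (sum_le_sum_of_subset_of_nonneg hT fun _ _ _ => sq_nonneg _).trans
      (sum_image_le_of_nonneg fun _ _ => sq_nonneg _)
  have hwT : ∑ τ ∈ T, w τ ^ 2 ≤ ∑ τ ∈ range N, w τ ^ 2 :=
    sum_le_sum_of_subset_of_nonneg (filter_subset _ _) fun _ _ _ => sq_nonneg _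
  rw [← sum_filter_of_ne fun τ _ h => left_ne_zero_of_mul h]
  calc |∑ τ ∈ T, w τ * v τ| ≤ √((∑ τ ∈ T, w τ ^ 2) * ∑ τ ∈ T, v τ ^ 2) :=
        Real.abs_le_sqrt (sum_mul_sq_le_sq_mul_sq _ _ _)
    _ ≤ √((∑ τ ∈ range N, w τ ^ 2) * ∑ s ∈ range m, v ((p + s) % N) ^ 2) := by
        gcongr
    _ = _ := Real.sqrt_mul (sum_nonneg fun _ _ => sq_nonneg _) _

lemma abs_sum_mul_le_sqrt_mul_patchNorm2 {w v : ℕ → ℝ} {p : ℕ} (hp : p < N)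
    (hw : ∀ τ < N, w τ ≠ 0 → ∃ s < m, τ = (p + s) % N) :
    |∑ τ ∈ range N, w τ * v τ| ≤ √(∑ τ ∈ range N, w τ ^ 2) * patchNorm2 N m v :=
  (abs_sum_mul_le_of_support_subset_patch hw).trans (by
    gcongr
    exact sqrt_sum_patch_le_patchNorm2 v hp)

end Patch

lemma sqrt_sum_sq_le_sqrt_card_filter_mul {ι : Type*} {s : Finset ι} {f g : ι → ℝ} {C : ℝ}
    (hC : 0 ≤ C) (hfg : ∀ j ∈ s, g j = 0 → f j = 0) (hf : ∀ j ∈ s, g j ≠ 0 → |f j| ≤ C) :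
    √(∑ j ∈ s, f j ^ 2) ≤ √(#{j ∈ s | g j ≠ 0}) * C := by
  have hsum : ∑ j ∈ s, f j ^ 2 ≤ #{j ∈ s | g j ≠ 0} * C ^ 2 := by
    rw [← sum_filter_of_ne (p := fun j => g j ≠ 0)
      fun j hj h hg => h (by rw [hfg j hj hg]; ring), ← nsmul_eq_mul]
    refine sum_le_card_nsmul _ _ _ fun j hj => ?_
    obtain ⟨hjs, hgj⟩ := mem_filter.mp hj
    obtain ⟨hlo, hhi⟩ := abs_le.mp (hf j hjs hgj)
    exact sq_le_sq' hlo hhi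
  calc √(∑ j ∈ s, f j ^ 2) ≤ √(#{j ∈ s | g j ≠ 0} * C ^ 2) := Real.sqrt_le_sqrt hsum
    _ = _ := by rw [Real.sqrt_mul (Nat.cast_nonneg _), Real.sqrt_sq hC]

section PatchBound

variable {L p : ℕ} {f g : ℕ → ℝ} {C : ℝ}

lemma ncard_patch_support (g : ℕ → ℝ) (i : ℕ) :
    Set.ncard {j | j < p ∧ g ((i + j) % L) ≠ 0} = #{j ∈ range p | g ((i + j) % L) ≠ 0} := by
  rw [← Set.ncard_coe_finset, coe_filter]
  simp only [mem_range]

lemma patchNorm2_le_sqrt_patchNorm0_mul_of_nonneg (hC : 0 ≤ C)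
    (hfg : ∀ t < L, g t = 0 → f t = 0) (hf : ∀ t < L, g t ≠ 0 → |f t| ≤ C) :
    patchNorm2 L p f ≤ √(patchNorm0 L p g) * C := by
  refine Real.sSup_le ?_ (by positivity)
  rintro _ ⟨i, hi, rfl⟩
  have hL : 0 < L := lt_of_le_of_lt (Nat.zero_le _) hi
  have hK : #{j ∈ range p | g ((i + j) % L) ≠ 0} ≤ patchNorm0 L p g := by
    rw [← ncard_patch_support]
    exact le_sup (f := fun i => Set.ncard {j | j < p ∧ g ((i + j) % L) ≠ 0}) (mem_range.mpr hi)
  calc √(∑ j ∈ range p, f ((i + j) % L) ^ 2)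
      ≤ √(#{j ∈ range p | g ((i + j) % L) ≠ 0}) * C :=
        sqrt_sum_sq_le_sqrt_card_filter_mul hC (fun j _ => hfg _ (Nat.mod_lt _ hL))
          (fun j _ => hf _ (Nat.mod_lt _ hL))
    _ ≤ √(patchNorm0 L p g) * C := by gcongr

lemma patchNorm0_eq_zero (hg : ∀ t < L, g t = 0) : patchNorm0 L p g = 0 := by
  refine Nat.eq_zero_of_le_zero (Finset.sup_le fun i hi => ?_)
  have hL : 0 < L := lt_of_le_of_lt (Nat.zero_le _) (mem_range.mp hi)
  simp [hg _ (Nat.mod_lt _ hL)]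

lemma patchNorm2_le_sqrt_patchNorm0_mul
    (hfg : ∀ t < L, g t = 0 → f t = 0) (hf : ∀ t < L, g t ≠ 0 → |f t| ≤ C) :
    patchNorm2 L p f ≤ √(patchNorm0 L p g) * C := by
  by_cases hC : 0 ≤ C
  · exact patchNorm2_le_sqrt_patchNorm0_mul_of_nonneg hC hfg hf
  · have hg : ∀ t < L, g t = 0 := fun t ht => by
      by_contra h
      exact hC ((abs_nonneg _).trans (hf t ht h))
    have := patchNorm2_le_sqrt_patchNorm0_mul_of_nonneg (p := p) le_rfl hfg
      fun t ht h => absurd (hg t ht) h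
    simpa [patchNorm0_eq_zero hg] using this

end PatchBound

/-- Single-layer stability: if hard thresholding
`x̂ = H_{|Λ|}((A D)ᵀ (A D x + v))` recovers the support `Λ` of `x`, then
`‖x̂ − x‖_{2,∞}^P ≤ √(‖x̂‖_{0,∞}^P) (μ (S − 1) |x_max| + ζ)`.
Here the dictionary `A ∈ ℝ^{N × nM}` has unit-norm columns `a j` (for `j < nM`),
each supported on `m` consecutive coordinates of `ℝ^N` with cyclic wraparound; the
noise is measured with patches of length `m` in `ℝ^N`, and the layer-`l` norms are
measured with patches of length `mp` in `ℝ^{nM}`. -/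
theorem single_layer_stability
    (N n M m mp : ℕ)
    -- columns of `A`, unit ℓ2 norm, locally supported on `m` consecutive coords
    (a : ℕ → ℕ → ℝ)
    (ha : ∀ j < n * M, ∑ t ∈ Finset.range N, a j t ^ 2 = 1)
    (hloc : ∀ j < n * M, ∃ i < N, ∀ t < N, a j t ≠ 0 → ∃ s < m, t = (i + s) % N)
    -- mutual coherence `μ`
    (μ : ℝ) (hμ0 : 0 ≤ μ)
    (hμ : ∀ i < n * M, ∀ j < n * M, i ≠ j → |∑ t ∈ Finset.range N, a i t * a j t| ≤ μ)
    -- `x ∈ ℝ^{nM}` with support `Λ` and largest nonzero magnitude `x_max`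
    (x : ℕ → ℝ) (Λ : Finset ℕ)
    (hΛsub : ∀ i ∈ Λ, i < n * M)
    (hΛ : ∀ i < n * M, (x i ≠ 0 ↔ i ∈ Λ))
    (xmax : ℝ) (hxmax : ∀ i ∈ Λ, |x i| ≤ xmax)
    -- overlap (stripe-sparsity) bound on `Λ`
    (S : ℕ)
    (hS : ∀ i ∈ Λ, Set.ncard
      {j | j ∈ Λ ∧ (∑ t ∈ Finset.range N, a i t * a j t) ≠ 0} ≤ S)
    -- noise, bounded in patch norm
    (v : ℕ → ℝ) (ζ : ℝ) (hv : patchNorm2 N m v ≤ ζ)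
    -- fixed diagonal sign matrix `D = diag(ε)`
    (ε : ℕ → ℝ) (hε : ∀ j, ε j = 1 ∨ ε j = -1)
    -- the estimate `x̂ = H_{|Λ|}((A D)ᵀ (A D x + v))`
    (xhat : ℕ → ℝ)
    (hxhat : xhat = hardThreshold (Finset.range (n * M)) Λ.card
      (fun k => ε k * ∑ t ∈ Finset.range N,
        a k t * ((∑ j ∈ Finset.range (n * M), ε j * x j * a j t) + v t)))
    -- assume the support is recovered: `supp(x̂) = Λ`
    (hrec : ∀ i < n * M, (xhat i ≠ 0 ↔ i ∈ Λ)) :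
    patchNorm2 (n * M) mp (fun t => xhat t - x t) ≤
      Real.sqrt (patchNorm0 (n * M) mp xhat) * (μ * ((S : ℝ) - 1) * xmax + ζ) := by
  have hnoise : ∀ t < n * M, |∑ τ ∈ range N, a t τ * v τ| ≤ ζ := fun t ht => by
    obtain ⟨p, hp, hsupp⟩ := hloc t ht
    have := abs_sum_mul_le_sqrt_mul_patchNorm2 (v := v) hp hsupp
    rw [ha t ht, Real.sqrt_one, one_mul] at this
    exact this.trans hv
  have hkey : ∀ t ∈ Λ, |xhat t - x t| ≤ μ * ((S : ℝ) - 1) * xmax + ζ := by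
    intro t ht
    have htM := hΛsub t ht
    have hne := (hrec t htM).mpr ht
    have hGtt : ∑ τ ∈ range N, a t τ * a t τ = 1 := by simpa only [sq] using ha t htM
    have hΛs : Λ ⊆ range (n * M) := fun j hj => mem_range.mpr (hΛsub j hj)
    have hSt : #{j ∈ Λ | ∑ τ ∈ range N, a t τ * a j τ ≠ 0} ≤ S := by
      simpa only [← Set.ncard_coe_finset, coe_filter] using hS t ht
    rw [hxhat] at hne ⊢
    rw [hardThreshold_eq_of_ne_zero hne, sum_mul_sum_add_eq]
    calc _ ≤ |∑ j ∈ (range (n * M)).erase t, ε j * x j * ∑ τ ∈ range N, a t τ * a j τ| +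
          |∑ τ ∈ range N, a t τ * v τ| := abs_sign_mul_sub_le (mem_range.mpr htM) (hε t) hGtt _
      _ ≤ (S - 1) * (xmax * μ) + ζ := by
          refine add_le_add (abs_sum_erase_mul_le hΛs ht (hGtt ▸ one_ne_zero) hμ0
            (fun j hj hjΛ => ?_) (fun j hj => ?_) (fun j hj hjt => hμ t htM j (hΛsub j hj)
            (Ne.symm hjt)) hSt) (hnoise t htM)
          · rw [Not.imp_symm (hΛ j (mem_range.mp hj)).mp hjΛ, mul_zero]
          · rcases hε j with h | h <;> simp [h, hxmax j hj]
      _ = μ * ((S : ℝ) - 1) * xmax + ζ := by ring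
  refine patchNorm2_le_sqrt_patchNorm0_mul (fun t ht h0 => ?_)
    fun t ht h0 => hkey t ((hrec t ht).mp h0)
  have htΛ : t ∉ Λ := fun h => (hrec t ht).mpr h h0
  rw [h0, Not.imp_symm (hΛ t ht).mp htΛ, sub_zero]
end

section
/- In the setting of the recursive multi-layer model (matrices A^{(l)} with unit ℓ2-norm columns locally supported on m_l consecutive coordinates, coherences μ_l, independent random diagonal sign matrices D^{(l)}, representations x^{(l−1)} = A^{(l)} D^{(l)} x^{(l)}, overlap bounds S_l, initial noise level ζ_0, recursively defined ζ_l = √(‖x^{(l)}‖_{0,∞}^P)(μ_l (S_l − 1)|x_max^{(l)}| + ζ_{l−1}), and estimates x̂^{(l)} = H_{|supp(x^{(l)})|}((A^{(l)} D^{(l)})ᵀ x̂^{(l−1)})): on the event that supp(x̂^{(l)}) = supp(x^{(l)}) holds for all l = 1,…,L, the estimation errors satisfy ‖x̂^{(l)} − x^{(l)}‖_{2,∞}^P ≤ ζ_l for every l = 1,…,L. -/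
/-!
Fix a layer `l` and an atom `j` in the support of `x^{(l)}`. On the success event hard
thresholding keeps entry `j`, so `x̂_j = ε_j ⟨a_j, x̂^{(l-1)}⟩`; since `⟨a_j, a_j⟩ = 1` and
`ε_j² = 1`, the error `x̂_j - x_j` is `ε_j` times the interference
`∑_{k ≠ j} ε_k x_k ⟨a_j, a_k⟩` plus the propagated error `⟨a_j, x̂^{(l-1)} - x^{(l-1)}⟩`.
At most `S_l - 1` interference terms are nonzero, each at most `μ_l |x_max^{(l)}|`, and as `a_j`
is a unit vector supported on a single patch, Cauchy–Schwarz bounds the propagated error by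
`‖x̂^{(l-1)} - x^{(l-1)}‖_{2,∞}^P ≤ ζ_{l-1}`. Off the support the error vanishes, so each patch of
`x̂^{(l)} - x^{(l)}` has at most `‖x^{(l)}‖_{0,∞}^P` nonzero entries; induction on `l` concludes.
-/

open Finset

lemma ncard_setOf_lt_and_eq_card_filter (K : ℕ) (p : ℕ → Prop) [DecidablePred p] :
    {j | j < K ∧ p j}.ncard = #((range K).filter p) := by
  rw [← Set.ncard_coe_finset]
  congr 1
  ext j
  simp

lemma le_patchNorm2 {N : ℕ} (m : ℕ) (x : ℕ → ℝ) {i : ℕ} (hi : i < N) :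
    √(∑ s ∈ range m, x ((i + s) % N) ^ 2) ≤ patchNorm2 N m x :=
  le_csSup ((Set.finite_Iio N).image _).bddAbove ⟨i, hi, rfl⟩

lemma patchNorm2_le {N m : ℕ} {x : ℕ → ℝ} {c : ℝ} (hc : 0 ≤ c)
    (h : ∀ i < N, √(∑ s ∈ range m, x ((i + s) % N) ^ 2) ≤ c) : patchNorm2 N m x ≤ c :=
  Real.sSup_le (by rintro _ ⟨i, hi, rfl⟩; exact h i hi) hc

lemma card_filter_patch_le_patchNorm0 {N : ℕ} (m : ℕ) (x : ℕ → ℝ) {i : ℕ} (hi : i < N) :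
    #((range m).filter fun s => x ((i + s) % N) ≠ 0) ≤ patchNorm0 N m x := by
  rw [← ncard_setOf_lt_and_eq_card_filter]
  exact le_sup (f := fun i => {s | s < m ∧ x ((i + s) % N) ≠ 0}.ncard) (mem_range.mpr hi)

theorem abs_sum_mul_le_patchNorm2 {N m i : ℕ} {a e : ℕ → ℝ} (hi : i < N)
    (ha : ∑ t ∈ range N, a t ^ 2 = 1)
    (hsupp : ∀ t < N, a t ≠ 0 → ∃ s < m, t = (i + s) % N) :
    |∑ t ∈ range N, a t * e t| ≤ patchNorm2 N m e := by
  set P := (range m).image fun s => (i + s) % N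
  have hPN : P ⊆ range N := by
    intro t ht
    obtain ⟨s, -, rfl⟩ := mem_image.mp ht
    exact mem_range.mpr (Nat.mod_lt _ (by omega))
  have hsum : ∑ t ∈ range N, a t * e t = ∑ t ∈ P, a t * e t := by
    refine (sum_subset hPN fun t ht htP => ?_).symm
    by_contra h
    obtain ⟨s, hs, rfl⟩ := hsupp t (mem_range.mp ht) (left_ne_zero_of_mul h)
    exact htP (mem_image_of_mem _ (mem_range.mpr hs))
  have ha' : ∑ t ∈ P, a t ^ 2 ≤ 1 :=
    ha ▸ sum_le_sum_of_subset_of_nonneg hPN fun _ _ _ => sq_nonneg _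
  have he : ∑ t ∈ P, e t ^ 2 ≤ ∑ s ∈ range m, e ((i + s) % N) ^ 2 :=
    sum_image_le_of_nonneg fun _ _ => sq_nonneg _
  have hcs : (∑ t ∈ P, a t * e t) ^ 2 ≤ ∑ s ∈ range m, e ((i + s) % N) ^ 2 :=
    calc (∑ t ∈ P, a t * e t) ^ 2 ≤ (∑ t ∈ P, a t ^ 2) * ∑ t ∈ P, e t ^ 2 :=
          sum_mul_sq_le_sq_mul_sq _ _ _
      _ ≤ 1 * ∑ s ∈ range m, e ((i + s) % N) ^ 2 :=
          mul_le_mul ha' he (sum_nonneg fun _ _ => sq_nonneg _) zero_le_one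
      _ = _ := one_mul _
  rw [hsum]
  exact (Real.abs_le_sqrt hcs).trans (le_patchNorm2 m e hi)

lemma sum_sq_le_card_filter_mul_sq {ι : Type*} {s : Finset ι} {x e : ι → ℝ} {β : ℝ}
    (he : ∀ i ∈ s, x i = 0 → e i = 0) (hβ : ∀ i ∈ s, x i ≠ 0 → |e i| ≤ β) :
    ∑ i ∈ s, e i ^ 2 ≤ #(s.filter (x · ≠ 0)) * β ^ 2 := by
  rw [← sum_filter_add_sum_filter_not s (x · ≠ 0)]
  have hoff : ∑ i ∈ s.filter (¬x · ≠ 0), e i ^ 2 = 0 := sum_eq_zero fun i hi => by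
    obtain ⟨his, hxi⟩ := mem_filter.mp hi
    simp [he i his (not_not.mp hxi)]
  rw [hoff, add_zero, ← nsmul_eq_mul]
  refine sum_le_card_nsmul _ _ _ fun i hi => ?_
  obtain ⟨his, hxi⟩ := mem_filter.mp hi
  exact sq_le_sq' (abs_le.mp (hβ i his hxi)).1 (abs_le.mp (hβ i his hxi)).2

theorem patchNorm2_le_sqrt_patchNorm0_mul_s3 {N m : ℕ} {x e : ℕ → ℝ} {β : ℝ}
    (he : ∀ j < N, x j = 0 → e j = 0) (hβ : ∀ j < N, x j ≠ 0 → |e j| ≤ β) :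
    patchNorm2 N m e ≤ √(patchNorm0 N m x) * β := by
  have hpatch : ∀ i < N, ∑ s ∈ range m, e ((i + s) % N) ^ 2 ≤
      #((range m).filter fun s => x ((i + s) % N) ≠ 0) * β ^ 2 := fun i hi =>
    sum_sq_le_card_filter_mul_sq (fun _ _ => he _ (Nat.mod_lt _ (by omega)))
      (fun _ _ => hβ _ (Nat.mod_lt _ (by omega)))
  rcases lt_or_ge β 0 with hneg | hnonneg
  · -- a negative `β` forces `x = 0` on `[0, N)`, so both sides vanish
    have hempty : ∀ i < N, #((range m).filter fun s => x ((i + s) % N) ≠ 0) = 0 :=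
      fun i hi => card_eq_zero.mpr <| filter_eq_empty_iff.mpr fun s _ hs =>
        ((abs_nonneg _).trans (hβ _ (Nat.mod_lt _ (by omega)) hs)).not_gt hneg
    have hzero : patchNorm0 N m x = 0 := Nat.eq_zero_of_le_zero <| Finset.sup_le fun i hi => by
      rw [ncard_setOf_lt_and_eq_card_filter, hempty i (mem_range.mp hi)]
    rw [hzero, Nat.cast_zero, Real.sqrt_zero, zero_mul]
    exact patchNorm2_le le_rfl fun i hi =>
      (Real.sqrt_le_sqrt (hpatch i hi)).trans (by simp [hempty i hi])
  · refine patchNorm2_le (by positivity) fun i hi => ?_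
    calc √(∑ s ∈ range m, e ((i + s) % N) ^ 2)
        ≤ √(#((range m).filter fun s => x ((i + s) % N) ≠ 0) * β ^ 2) :=
          Real.sqrt_le_sqrt (hpatch i hi)
      _ ≤ √(patchNorm0 N m x * β ^ 2) := Real.sqrt_le_sqrt <| mul_le_mul_of_nonneg_right
          (by exact_mod_cast card_filter_patch_le_patchNorm0 m x hi) (sq_nonneg _)
      _ = √(patchNorm0 N m x) * β := by
          rw [Real.sqrt_mul (Nat.cast_nonneg _), Real.sqrt_sq hnonneg]

theorem abs_sum_erase_le_of_card_filter_ne_zero {ι : Type*} [DecidableEq ι] {s : Finset ι}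
    {j : ι} {f : ι → ℝ} {c : ℝ} {S : ℕ} (hj : j ∈ s) (hfj : f j ≠ 0) (hc : 0 ≤ c)
    (hf : ∀ k ∈ s, k ≠ j → |f k| ≤ c) (hS : #(s.filter (f · ≠ 0)) ≤ S) :
    |∑ k ∈ s.erase j, f k| ≤ (S - 1 : ℝ) * c := by
  set F := (s.filter (f · ≠ 0)).erase j
  have hjF : j ∈ s.filter (f · ≠ 0) := mem_filter.mpr ⟨hj, hfj⟩
  have hsum : ∑ k ∈ s.erase j, f k = ∑ k ∈ F, f k := by
    rw [← sum_filter_ne_zero, filter_erase]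
  have hcard : (#F : ℝ) ≤ S - 1 := by
    have hF : #F + 1 ≤ S := by
      have : #F + 1 = #(s.filter (f · ≠ 0)) := card_erase_add_one hjF
      omega
    have : (#F : ℝ) + 1 ≤ S := by exact_mod_cast hF
    linarith
  have hterms : ∀ k ∈ F, |f k| ≤ c := fun k hk =>
    hf k (mem_filter.mp (mem_of_mem_erase hk)).1 (ne_of_mem_erase hk)
  calc |∑ k ∈ s.erase j, f k| = |∑ k ∈ F, f k| := by rw [hsum]
    _ ≤ ∑ k ∈ F, |f k| := abs_sum_le_sum_abs _ _
    _ ≤ #F * c := by simpa using sum_le_card_nsmul F _ _ hterms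
    _ ≤ (S - 1) * c := mul_le_mul_of_nonneg_right hcard hc

theorem abs_sub_le_of_coherence {ι τ : Type*} [DecidableEq ι] {J : Finset ι} {T : Finset τ}
    {A : ι → τ → ℝ} {ε x : ι → ℝ} {y yhat : τ → ℝ} {μ xmax : ℝ} {S : ℕ} {j : ι}
    (hj : j ∈ J) (hxj : x j ≠ 0) (hunit : ∑ t ∈ T, A j t ^ 2 = 1)
    (hε : ∀ k, ε k = 1 ∨ ε k = -1) (hμ0 : 0 ≤ μ)
    (hμ : ∀ k ∈ J, k ≠ j → |∑ t ∈ T, A j t * A k t| ≤ μ) (hx : ∀ k ∈ J, |x k| ≤ xmax)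
    (hS : #(J.filter fun k => x k ≠ 0 ∧ ∑ t ∈ T, A j t * A k t ≠ 0) ≤ S)
    (hy : ∀ t, y t = ∑ k ∈ J, ε k * x k * A k t) :
    |ε j * ∑ t ∈ T, A j t * yhat t - x j| ≤
      μ * (S - 1) * xmax + |∑ t ∈ T, A j t * (yhat t - y t)| := by
  set G := fun k => ∑ t ∈ T, A j t * A k t
  have hεabs : ∀ k, |ε k| = 1 := fun k => by rcases hε k with h | h <;> simp [h]
  have hεne : ∀ k, ε k ≠ 0 := fun k => by rcases hε k with h | h <;> simp [h]
  have hGjj : G j = 1 := by simp only [G, ← hunit, sq]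
  have hsignal : ∑ t ∈ T, A j t * y t = ε j * x j + ∑ k ∈ J.erase j, ε k * x k * G k := by
    have hfubini : ∑ t ∈ T, A j t * y t = ∑ k ∈ J, ε k * x k * G k := by
      simp only [G, hy, mul_sum]
      rw [sum_comm]
      exact sum_congr rfl fun _ _ => sum_congr rfl fun _ _ => by ring
    rw [hfubini, ← add_sum_erase _ _ hj, hGjj, mul_one]
  have hdecomp : ε j * ∑ t ∈ T, A j t * yhat t - x j =
      ε j * (∑ k ∈ J.erase j, ε k * x k * G k + ∑ t ∈ T, A j t * (yhat t - y t)) := by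
    have hεj : ε j * ε j = 1 := by rcases hε j with h | h <;> simp [h]
    simp only [mul_sub, sum_sub_distrib, hsignal]
    linear_combination x j * hεj
  have hinterference : |∑ k ∈ J.erase j, ε k * x k * G k| ≤ (S - 1) * (μ * xmax) := by
    refine abs_sum_erase_le_of_card_filter_ne_zero hj (by simp [hGjj, hxj, hεne])
      (mul_nonneg hμ0 ((abs_nonneg _).trans (hx j hj))) (fun k hk hkj => ?_) ?_
    · rw [abs_mul, abs_mul, hεabs, one_mul, mul_comm μ]
      exact mul_le_mul (hx k hk) (hμ k hk hkj) (abs_nonneg _) ((abs_nonneg _).trans (hx j hj))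
    · simpa [mul_ne_zero_iff, hεne] using hS
  rw [hdecomp, abs_mul, hεabs, one_mul]
  calc _ ≤ |∑ k ∈ J.erase j, ε k * x k * G k| + |∑ t ∈ T, A j t * (yhat t - y t)| :=
        abs_add_le _ _
    _ ≤ (S - 1) * (μ * xmax) + |∑ t ∈ T, A j t * (yhat t - y t)| := by gcongr
    _ = _ := by ring

theorem patchNorm2_sub_le_of_support_eq {N K m m' S k : ℕ} {A : ℕ → ℕ → ℝ}
    {ε x y yhat xhat : ℕ → ℝ} {μ xmax ζ : ℝ}
    (hunit : ∀ j < K, ∑ t ∈ range N, A j t ^ 2 = 1) (hμ0 : 0 ≤ μ)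
    (hμ : ∀ i < K, ∀ j < K, i ≠ j → |∑ t ∈ range N, A i t * A j t| ≤ μ)
    (hloc : ∀ j < K, ∃ i < N, ∀ t < N, A j t ≠ 0 → ∃ s < m, t = (i + s) % N)
    (hε : ∀ j, ε j = 1 ∨ ε j = -1) (hy : ∀ t, y t = ∑ j ∈ range K, ε j * x j * A j t)
    (hS : ∀ i < K, {j | j < K ∧ x j ≠ 0 ∧ ∑ t ∈ range N, A i t * A j t ≠ 0}.ncard ≤ S)
    (hx : ∀ j < K, |x j| ≤ xmax)
    (hxhat : xhat = hardThreshold (range K) k fun j => ε j * ∑ t ∈ range N, A j t * yhat t)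
    (hsupp : ∀ j < K, xhat j ≠ 0 ↔ x j ≠ 0)
    (hprev : patchNorm2 N m (fun t => yhat t - y t) ≤ ζ) :
    patchNorm2 K m' (fun j => xhat j - x j) ≤
      √(patchNorm0 K m' x) * (μ * (S - 1) * xmax + ζ) := by
  refine patchNorm2_le_sqrt_patchNorm0_mul_s3 (fun j hj hxj => ?_) (fun j hj hxj => ?_)
  · have : xhat j = 0 := not_not.mp fun h => (hsupp j hj).mp h hxj
    simp [this, hxj]
  · have hkeep : xhat j = ε j * ∑ t ∈ range N, A j t * yhat t := by
      have hne := (hsupp j hj).mpr hxj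
      rw [hxhat] at hne ⊢
      exact hardThreshold_eq_of_ne_zero hne
    obtain ⟨i, hi, hpatch⟩ := hloc j hj
    have hnoise := (abs_sum_mul_le_patchNorm2 hi (hunit j hj) hpatch).trans hprev
    rw [hkeep]
    refine (abs_sub_le_of_coherence (mem_range.mpr hj) hxj (hunit j hj) hε hμ0
      (fun k hk hkj => hμ j hj k (mem_range.mp hk) hkj.symm)
      (fun k hk => hx k (mem_range.mp hk)) ?_ hy).trans (by gcongr)
    rw [← ncard_setOf_lt_and_eq_card_filter]
    exact hS j hj

theorem multilayer_stability_on_success_general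
    (L M : ℕ) (n : ℕ → ℕ)
    (m : ℕ → ℕ)
    -- `A l j t`: entry `t` of column `j` of the layer-`l` dictionary
    (A : ℕ → ℕ → ℕ → ℝ)
    (hunit : ∀ l, 1 ≤ l → l ≤ L → ∀ j < n l * M,
      ∑ t ∈ Finset.range (n (l - 1) * M), A l j t ^ 2 = 1)
    -- mutual coherences `μ_l`
    (μ : ℕ → ℝ) (hμ0 : ∀ l, 0 ≤ μ l)
    (hμ : ∀ l, 1 ≤ l → l ≤ L → ∀ i < n l * M, ∀ j < n l * M, i ≠ j →
      |∑ t ∈ Finset.range (n (l - 1) * M), A l i t * A l j t| ≤ μ l)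
    -- each column of `A^{(l)}` is supported on `m_l` consecutive coordinates
    (hloc : ∀ l, 1 ≤ l → l ≤ L → ∀ j < n l * M, ∃ i < n (l - 1) * M,
      ∀ t < n (l - 1) * M, A l j t ≠ 0 → ∃ s < m l, t = (i + s) % (n (l - 1) * M))
    -- a fixed realisation of the diagonal sign matrices `D^{(l)} = diag(ε l ·)`
    (ε : ℕ → ℕ → ℝ)
    (hε : ∀ l j, ε l j = 1 ∨ ε l j = -1)
    -- the latent representations: `x^{(l−1)} = A^{(l)} D^{(l)} x^{(l)}`
    (X : ℕ → ℕ → ℝ)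
    (hXrec : ∀ l, 1 ≤ l → l ≤ L → ∀ t, X (l - 1) t =
      ∑ j ∈ Finset.range (n l * M), ε l j * X l j * A l j t)
    -- noise on the observed data, bounded in patch norm
    (v0 : ℕ → ℝ) (ζ : ℕ → ℝ)
    (hv0 : patchNorm2 (n 0 * M) (m 1) v0 ≤ ζ 0)
    -- overlap (stripe-sparsity) bounds `S_l`
    (S : ℕ → ℕ)
    (hS : ∀ l, 1 ≤ l → l ≤ L → ∀ k < n l * M,
      Set.ncard {j | j < n l * M ∧ X l j ≠ 0 ∧
        (∑ t ∈ Finset.range (n (l - 1) * M), A l k t * A l j t) ≠ 0} ≤ S l)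
    -- largest nonzero magnitudes at each layer
    (xmax : ℕ → ℝ)
    (hx : ∀ l, 1 ≤ l → l ≤ L → ∀ j < n l * M, |X l j| ≤ xmax l)
    -- the recursively defined error levels `ζ_l`
    (hζ : ∀ l, 1 ≤ l → l ≤ L → ζ l =
      Real.sqrt (patchNorm0 (n l * M) (m (l + 1)) (X l)) *
        (μ l * ((S l : ℝ) - 1) * xmax l + ζ (l - 1)))
    -- the forward-pass estimates: `x̂^{(0)} = x^{(0)} + v^{(0)}` and
    -- `x̂^{(l)} = H_{|supp(x^{(l)})|}((A^{(l)} D^{(l)})ᵀ x̂^{(l−1)})`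
    (Xhat : ℕ → ℕ → ℝ)
    (hXhat0 : ∀ t, Xhat 0 t = X 0 t + v0 t)
    (hXhatrec : ∀ l, 1 ≤ l → l ≤ L → Xhat l =
      hardThreshold (Finset.range (n l * M))
        (Set.ncard {j | j < n l * M ∧ X l j ≠ 0})
        (fun k => ε l k *
          ∑ t ∈ Finset.range (n (l - 1) * M), A l k t * Xhat (l - 1) t))
    -- the success event: the support is recovered at every layer
    (hsucc : ∀ l, 1 ≤ l → l ≤ L → ∀ j < n l * M, (Xhat l j ≠ 0 ↔ X l j ≠ 0)) :
    ∀ l, 1 ≤ l → l ≤ L →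
      patchNorm2 (n l * M) (m (l + 1)) (fun t => Xhat l t - X l t) ≤ ζ l := by
  have hstep : ∀ l, 1 ≤ l → l ≤ L →
      patchNorm2 (n (l - 1) * M) (m l) (fun t => Xhat (l - 1) t - X (l - 1) t) ≤ ζ (l - 1) →
      patchNorm2 (n l * M) (m (l + 1)) (fun t => Xhat l t - X l t) ≤ ζ l := by
    intro l h1 hL hprev
    rw [hζ l h1 hL]
    exact patchNorm2_sub_le_of_support_eq (hunit l h1 hL) (hμ0 l) (hμ l h1 hL) (hloc l h1 hL)
      (hε l) (hXrec l h1 hL) (hS l h1 hL) (hx l h1 hL) (hXhatrec l h1 hL) (hsucc l h1 hL) hprev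
  intro l hl
  induction l, hl using Nat.le_induction with
  | base => exact fun hL => hstep 1 le_rfl hL (by simpa [hXhat0] using hv0)
  | succ l hl ih => exact fun hL => hstep (l + 1) (by omega) hL (ih (by omega))

/-- Multi-layer stability on the success event: in the recursive
multi-layer model (here with a fixed realisation of the diagonal sign matrices),
if the forward pass recovers the support of the latent representation at every
layer `l = 1,…,L`, then the estimation errors satisfy
`‖x̂^{(l)} − x^{(l)}‖_{2,∞}^P ≤ ζ_l` for every `l = 1,…,L`, where
`ζ_l = √(‖x^{(l)}‖_{0,∞}^P)(μ_l (S_l − 1)|x_max^{(l)}| + ζ_{l−1})`. -/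
theorem multilayer_stability_on_success
    (L M : ℕ) (n : ℕ → ℕ) (hn0 : n 0 = 1)
    (m : ℕ → ℕ)
    -- `A l j t`: entry `t` of column `j` of the layer-`l` dictionary
    (A : ℕ → ℕ → ℕ → ℝ)
    (hunit : ∀ l, 1 ≤ l → l ≤ L → ∀ j < n l * M,
      ∑ t ∈ Finset.range (n (l - 1) * M), A l j t ^ 2 = 1)
    -- mutual coherences `μ_l`
    (μ : ℕ → ℝ) (hμ0 : ∀ l, 0 ≤ μ l)
    (hμ : ∀ l, 1 ≤ l → l ≤ L → ∀ i < n l * M, ∀ j < n l * M, i ≠ j →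
      |∑ t ∈ Finset.range (n (l - 1) * M), A l i t * A l j t| ≤ μ l)
    -- each column of `A^{(l)}` is supported on `m_l` consecutive coordinates
    (hloc : ∀ l, 1 ≤ l → l ≤ L → ∀ j < n l * M, ∃ i < n (l - 1) * M,
      ∀ t < n (l - 1) * M, A l j t ≠ 0 → ∃ s < m l, t = (i + s) % (n (l - 1) * M))
    -- a fixed realisation of the diagonal sign matrices `D^{(l)} = diag(ε l ·)`
    (ε : ℕ → ℕ → ℝ)
    (hε : ∀ l j, ε l j = 1 ∨ ε l j = -1)
    -- the latent representations: `x^{(l−1)} = A^{(l)} D^{(l)} x^{(l)}`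
    (X : ℕ → ℕ → ℝ)
    (hXrec : ∀ l, 1 ≤ l → l ≤ L → ∀ t, X (l - 1) t =
      ∑ j ∈ Finset.range (n l * M), ε l j * X l j * A l j t)
    -- noise on the observed data, bounded in patch norm
    (v0 : ℕ → ℝ) (ζ : ℕ → ℝ)
    (hv0 : patchNorm2 (n 0 * M) (m 1) v0 ≤ ζ 0)
    -- overlap (stripe-sparsity) bounds `S_l`
    (S : ℕ → ℕ)
    (hS : ∀ l, 1 ≤ l → l ≤ L → ∀ k < n l * M,
      Set.ncard {j | j < n l * M ∧ X l j ≠ 0 ∧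
        (∑ t ∈ Finset.range (n (l - 1) * M), A l k t * A l j t) ≠ 0} ≤ S l)
    -- largest nonzero magnitudes at each layer
    (xmax : ℕ → ℝ)
    (hx : ∀ l, 1 ≤ l → l ≤ L → ∀ j < n l * M, |X l j| ≤ xmax l)
    -- the recursively defined error levels `ζ_l`
    (hζ : ∀ l, 1 ≤ l → l ≤ L → ζ l =
      Real.sqrt (patchNorm0 (n l * M) (m (l + 1)) (X l)) *
        (μ l * ((S l : ℝ) - 1) * xmax l + ζ (l - 1)))
    -- the forward-pass estimates: `x̂^{(0)} = x^{(0)} + v^{(0)}` and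
    -- `x̂^{(l)} = H_{|supp(x^{(l)})|}((A^{(l)} D^{(l)})ᵀ x̂^{(l−1)})`
    (Xhat : ℕ → ℕ → ℝ)
    (hXhat0 : ∀ t, Xhat 0 t = X 0 t + v0 t)
    (hXhatrec : ∀ l, 1 ≤ l → l ≤ L → Xhat l =
      hardThreshold (Finset.range (n l * M))
        (Set.ncard {j | j < n l * M ∧ X l j ≠ 0})
        (fun k => ε l k *
          ∑ t ∈ Finset.range (n (l - 1) * M), A l k t * Xhat (l - 1) t))
    -- the success event: the support is recovered at every layer
    (hsucc : ∀ l, 1 ≤ l → l ≤ L → ∀ j < n l * M, (Xhat l j ≠ 0 ↔ X l j ≠ 0)) :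
    ∀ l, 1 ≤ l → l ≤ L →
      patchNorm2 (n l * M) (m (l + 1)) (fun t => Xhat l t - X l t) ≤ ζ l :=
  multilayer_stability_on_success_general L M n m A hunit μ hμ0 hμ hloc ε hε X hXrec v0 ζ hv0 S hS
    xmax hx hζ Xhat hXhat0 hXhatrec hsucc
end

section
/- Let a_1,…,a_N ∈ R^n be unit ℓ2-norm vectors with μ = max_{i≠j}|⟨a_i,a_j⟩|, let x ∈ R^N be supported on Λ ⊆ {1,…,N} with entries bounded in magnitude by |x_max|, such that |{j ∈ Λ : ⟨a_k, a_j⟩ ≠ 0}| ≤ S for the fixed index k ∉ Λ, and let v ∈ R^n satisfy |⟨a_k, v⟩| ≤ ζ. Let ε_1,…,ε_N be i.i.d. uniform on {−1,+1} and set y = Σ_{j∈Λ} ε_j x_j a_j + v. Then for every p > 0, P( |⟨ε_k a_k, y⟩| > p ) ≤ 2 exp( −p² / (2 ( Σ_{j∈Λ} x_j² ⟨a_k, a_j⟩² + ζ² )) ) ≤ 2 exp( −p² / (2 (|x_max|² S μ² + ζ²)) ). -/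
/-!
Write `⟨a_k, y⟩ = W + c` with `W = ∑_{j∈Λ} ε_j x_j ⟨a_k, a_j⟩` and `c = ⟨a_k, v⟩`. The sum `W` of
independent Rademacher terms is sub-Gaussian with variance proxy `σ = ∑_{j∈Λ} x_j² ⟨a_k, a_j⟩²`.
Since `ε_k` is independent of `W`, conditioning on `ε_k = ±1` gives
`E exp (t ε_k (W + c)) = (E exp (t (W + c)) + E exp (-t (W + c))) / 2 ≤ exp (σ t² / 2) cosh (t c)`,
and `cosh (t c) ≤ exp (ζ² t² / 2)`. The Chernoff bound on both tails gives the first estimate; the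
second follows because at most `S` terms of `σ` are nonzero, each at most `x_max² μ²`.
-/

open MeasureTheory ProbabilityTheory Real
open scoped NNReal

section ExpIntegrable

variable {Ω : Type*} [MeasurableSpace Ω] {P : Measure Ω} {U : Ω → ℝ}

lemma integrable_cosh_mul (hU : ∀ t, Integrable (fun ω => exp (t * U ω)) P) (t : ℝ) :
    Integrable (fun ω => cosh (t * U ω)) P := by
  simp_rw [cosh_eq, ← neg_mul]
  exact ((hU t).add (hU (-t))).div_const 2

lemma integrable_sinh_mul (hU : ∀ t, Integrable (fun ω => exp (t * U ω)) P) (t : ℝ) :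
    Integrable (fun ω => sinh (t * U ω)) P := by
  simp_rw [sinh_eq, ← neg_mul]
  exact ((hU t).sub (hU (-t))).div_const 2

end ExpIntegrable

def IsRademacher {Ω : Type*} [MeasurableSpace Ω] (Z : Ω → ℝ) (P : Measure Ω) : Prop :=
  P {ω | Z ω = 1} = 1 / 2 ∧ P {ω | Z ω = -1} = 1 / 2

namespace IsRademacher

variable {Ω : Type*} [MeasurableSpace Ω] {P : Measure Ω} [IsProbabilityMeasure P]
  {Z U : Ω → ℝ}

lemma ae_eq_one_or_eq_neg_one (hZ : IsRademacher Z P) (hZm : Measurable Z) :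
    ∀ᵐ ω ∂P, Z ω = 1 ∨ Z ω = -1 := by
  have hA : MeasurableSet {ω | Z ω = 1} := hZm (measurableSet_singleton 1)
  have hB : MeasurableSet {ω | Z ω = -1} := hZm (measurableSet_singleton (-1))
  have hdisj : Disjoint {ω | Z ω = 1} {ω | Z ω = -1} :=
    Set.disjoint_left.2 fun ω (h1 : Z ω = 1) (h2 : Z ω = -1) => by norm_num [h1] at h2
  refine (ae_iff_measure_eq ?_).2 ?_
  · rw [Set.ofPred_or]
    exact (hA.union hB).nullMeasurableSet
  · rw [Set.ofPred_or, measure_union hdisj hB, hZ.1, hZ.2, ENNReal.add_halves, measure_univ]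

lemma ae_norm_le_one (hZ : IsRademacher Z P) (hZm : Measurable Z) : ∀ᵐ ω ∂P, ‖Z ω‖ ≤ 1 := by
  filter_upwards [hZ.ae_eq_one_or_eq_neg_one hZm] with ω hω
  rcases hω with h | h <;> simp [h]

lemma integral_eq_zero (hZ : IsRademacher Z P) (hZm : Measurable Z) : P[Z] = 0 := by
  have hA : MeasurableSet {ω | Z ω = 1} := hZm (measurableSet_singleton 1)
  have hB : MeasurableSet {ω | Z ω = -1} := hZm (measurableSet_singleton (-1))
  have hZ_ae : Z =ᵐ[P] fun ω => {ω | Z ω = 1}.indicator 1 ω - {ω | Z ω = -1}.indicator 1 ω := by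
    filter_upwards [hZ.ae_eq_one_or_eq_neg_one hZm] with ω hω
    rcases hω with h | h <;> norm_num [Set.indicator, h]
  rw [integral_congr_ae hZ_ae, integral_sub ((integrable_const 1).indicator hA)
    ((integrable_const 1).indicator hB), integral_indicator_one hA, integral_indicator_one hB,
    measureReal_def, measureReal_def, hZ.1, hZ.2, sub_self]

lemma exp_mul_mul_ae_eq (hZ : IsRademacher Z P) (hZm : Measurable Z) (t : ℝ) :
    (fun ω => exp (t * (Z ω * U ω))) =ᵐ[P]
      fun ω => cosh (t * U ω) + Z ω * sinh (t * U ω) := by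
  filter_upwards [hZ.ae_eq_one_or_eq_neg_one hZm] with ω hω
  rcases hω with h | h
  · simp [h, cosh_add_sinh]
  · simp [h, ← sub_eq_add_neg, cosh_sub_sinh]

lemma integrable_exp_mul_mul (hZ : IsRademacher Z P) (hZm : Measurable Z)
    (hU : ∀ t, Integrable (fun ω => exp (t * U ω)) P) (t : ℝ) :
    Integrable (fun ω => exp (t * (Z ω * U ω))) P := by
  refine Integrable.congr ?_ (hZ.exp_mul_mul_ae_eq hZm t).symm
  exact (integrable_cosh_mul hU t).add
    ((integrable_sinh_mul hU t).bdd_mul hZm.aestronglyMeasurable (hZ.ae_norm_le_one hZm))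

lemma mgf_mul (hZ : IsRademacher Z P) (hZm : Measurable Z) (hZU : IndepFun Z U P)
    (hU : ∀ t, Integrable (fun ω => exp (t * U ω)) P) (t : ℝ) :
    mgf (fun ω => Z ω * U ω) P t = (mgf U P t + mgf U P (-t)) / 2 := by
  have hodd : ∫ ω, Z ω * sinh (t * U ω) ∂P = 0 := by
    have hind : IndepFun Z (fun ω => sinh (t * U ω)) P :=
      hZU.comp measurable_id (by fun_prop : Measurable fun u => sinh (t * u))
    simpa [hZ.integral_eq_zero hZm] using
      hind.integral_mul_eq_mul_integral hZm.aestronglyMeasurable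
        (integrable_sinh_mul hU t).aestronglyMeasurable
  rw [mgf, integral_congr_ae (hZ.exp_mul_mul_ae_eq hZm t),
    integral_add (integrable_cosh_mul hU t) ((integrable_sinh_mul hU t).bdd_mul
      hZm.aestronglyMeasurable (hZ.ae_norm_le_one hZm)), hodd, add_zero]
  simp_rw [cosh_eq, ← neg_mul]
  rw [integral_div, integral_add (hU t) (hU (-t)), mgf, mgf]

lemma hasSubgaussianMGF_mul_add_const (hZ : IsRademacher Z P) (hZm : Measurable Z) {W : Ω → ℝ}
    {σ : ℝ≥0} (hW : HasSubgaussianMGF W σ P) (hZW : IndepFun Z W P) (c : ℝ) :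
    HasSubgaussianMGF (fun ω => Z ω * (W ω + c)) (σ + ‖c‖₊ ^ 2) P := by
  have hU : ∀ t, Integrable (fun ω => exp (t * (W ω + c))) P := fun t => by
    simp_rw [mul_add, exp_add]
    exact (hW.integrable_exp_mul t).mul_const _
  have hZU : IndepFun Z (fun ω => W ω + c) P := hZW.comp measurable_id (measurable_add_const c)
  refine ⟨hZ.integrable_exp_mul_mul hZm hU, fun t => ?_⟩
  rw [hZ.mgf_mul hZm hZU hU t, mgf_add_const, mgf_add_const]
  calc (mgf W P t * exp (t * c) + mgf W P (-t) * exp (-t * c)) / 2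
      ≤ (exp (σ * t ^ 2 / 2) * exp (t * c) + exp (σ * (-t) ^ 2 / 2) * exp (-t * c)) / 2 := by
        gcongr
        exacts [hW.mgf_le t, hW.mgf_le (-t)]
    _ = exp (σ * t ^ 2 / 2) * cosh (t * c) := by rw [cosh_eq, neg_sq, neg_mul]; ring
    _ ≤ exp (σ * t ^ 2 / 2) * exp ((t * c) ^ 2 / 2) := by gcongr; exact cosh_le_exp_half_sq _
    _ = exp ((σ + ‖c‖₊ ^ 2 : ℝ≥0) * t ^ 2 / 2) := by
        rw [← exp_add]
        push_cast
        rw [norm_eq_abs, sq_abs]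
        ring_nf

lemma hasSubgaussianMGF_mul_const (hZ : IsRademacher Z P) (hZm : Measurable Z) (a : ℝ) :
    HasSubgaussianMGF (fun ω => Z ω * a) (‖a‖₊ ^ 2) P := by
  simpa using hZ.hasSubgaussianMGF_mul_add_const hZm HasSubgaussianMGF.zero
    (indepFun_const_right Z 0) a

end IsRademacher

namespace ProbabilityTheory.HasSubgaussianMGF

variable {Ω : Type*} [MeasurableSpace Ω] {P : Measure Ω} {X : Ω → ℝ} {c : ℝ≥0}

lemma mono (h : HasSubgaussianMGF X c P) {d : ℝ≥0} (hcd : c ≤ d) : HasSubgaussianMGF X d P :=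
  ⟨h.integrable_exp_mul, fun t => (h.mgf_le t).trans (by gcongr)⟩

lemma measure_abs_gt_le [IsFiniteMeasure P] (h : HasSubgaussianMGF X c P) {p : ℝ} (hp : 0 ≤ p) :
    P {ω | p < |X ω|} ≤ ENNReal.ofReal (2 * exp (-p ^ 2 / (2 * c))) := by
  have hsplit : {ω | p < |X ω|} ⊆ {ω | p ≤ X ω} ∪ {ω | p ≤ (-X) ω} := fun ω (hω : p < |X ω|) => by
    rcases lt_abs.1 hω with h | h
    exacts [Or.inl h.le, Or.inr (show p ≤ -X ω by linarith)]
  calc P {ω | p < |X ω|} ≤ P {ω | p ≤ X ω} + P {ω | p ≤ (-X) ω} :=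
        (measure_mono hsplit).trans (measure_union_le _ _)
    _ = ENNReal.ofReal (P.real {ω | p ≤ X ω}) + ENNReal.ofReal (P.real {ω | p ≤ (-X) ω}) := by
        rw [ofReal_measureReal, ofReal_measureReal]
    _ ≤ ENNReal.ofReal (exp (-p ^ 2 / (2 * c))) + ENNReal.ofReal (exp (-p ^ 2 / (2 * c))) := by
        gcongr
        exacts [h.measure_ge_le hp, h.neg.measure_ge_le hp]
    _ = ENNReal.ofReal (2 * exp (-p ^ 2 / (2 * c))) := by
        rw [← ENNReal.ofReal_add (by positivity) (by positivity), ← two_mul]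

lemma measure_abs_gt_le_of_le [IsFiniteMeasure P] (h : HasSubgaussianMGF X c P) {p D : ℝ}
    (hp : 0 ≤ p) (hcD : c ≤ D) :
    P {ω | p < |X ω|} ≤ ENNReal.ofReal (2 * exp (-p ^ 2 / (2 * D))) := by
  lift D to ℝ≥0 using c.2.trans hcD
  exact (h.mono (mod_cast hcD)).measure_abs_gt_le hp

end ProbabilityTheory.HasSubgaussianMGF

lemma ProbabilityTheory.iIndepFun.indepFun_sum_mul_of_notMem {Ω ι : Type*} [MeasurableSpace Ω]
    {P : Measure Ω} {ε : ι → Ω → ℝ} (h : iIndepFun ε P) (hm : ∀ i, Measurable (ε i))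
    {s : Finset ι} {k : ι} (hk : k ∉ s) (a : ι → ℝ) :
    IndepFun (ε k) (fun ω => ∑ j ∈ s, ε j ω * a j) P := by
  have hks := h.indepFun_finset {k} s (Finset.disjoint_singleton_left.2 hk) hm
  have hsum : Measurable fun z : s → ℝ => ∑ j : s, z j * a j := by fun_prop
  convert hks.comp (measurable_pi_apply ⟨k, Finset.mem_singleton_self k⟩) hsum using 1
  · rfl
  ext ω
  exact (Finset.sum_coe_sort s fun j => ε j ω * a j).symm

lemma Finset.sum_sq_mul_sq_le_of_card_filter_ne_zero_le {ι : Type*} (s : Finset ι) {f g : ι → ℝ}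
    {A B : ℝ} {S : ℕ} (hf : ∀ j ∈ s, |f j| ≤ A) (hg : ∀ j ∈ s, |g j| ≤ B)
    (hS : (s.filter fun j => g j ≠ 0).card ≤ S) :
    ∑ j ∈ s, f j ^ 2 * g j ^ 2 ≤ A ^ 2 * S * B ^ 2 := by
  have hterm : ∀ j ∈ s.filter fun j => g j ≠ 0, f j ^ 2 * g j ^ 2 ≤ A ^ 2 * B ^ 2 := by
    intro j hj
    have hjs := (Finset.mem_filter.1 hj).1
    exact mul_le_mul (sq_le_sq' (neg_le_of_abs_le (hf j hjs)) (le_of_abs_le (hf j hjs)))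
      (sq_le_sq' (neg_le_of_abs_le (hg j hjs)) (le_of_abs_le (hg j hjs))) (sq_nonneg _)
      (sq_nonneg _)
  calc ∑ j ∈ s, f j ^ 2 * g j ^ 2 = ∑ j ∈ s.filter fun j => g j ≠ 0, f j ^ 2 * g j ^ 2 :=
        (Finset.sum_filter_of_ne (p := fun j => g j ≠ 0) fun j _ hj hg0 => hj (by simp [hg0])).symm
    _ ≤ (s.filter fun j => g j ≠ 0).card * (A ^ 2 * B ^ 2) := by
        simpa using Finset.sum_le_sum hterm
    _ ≤ S * (A ^ 2 * B ^ 2) := by gcongr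
    _ = A ^ 2 * S * B ^ 2 := by ring

theorem off_support_correlation_single_general
    {Ω : Type*} [MeasurableSpace Ω] (P : Measure Ω) [IsProbabilityMeasure P]
    (n N : ℕ)
    -- unit ℓ2-norm vectors `a_1, …, a_N ∈ ℝ^n`
    (a : Fin N → Fin n → ℝ)
    -- mutual coherence `μ`
    (μ : ℝ)
    (hμ : ∀ i j, i ≠ j → |∑ t, a i t * a j t| ≤ μ)
    -- `x` supported on `Λ`, entries bounded in magnitude by `x_max`
    (Λ : Finset (Fin N)) (x : Fin N → ℝ)
    (xmax : ℝ) (hxmax : ∀ i, |x i| ≤ xmax)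
    -- the fixed off-support index `k`
    (k : Fin N) (hk : k ∉ Λ)
    -- overlap bound at `k`
    (S : ℕ)
    (hS : Set.ncard {j | j ∈ Λ ∧ (∑ t, a k t * a j t) ≠ 0} ≤ S)
    -- noise
    (v : Fin n → ℝ) (ζ : ℝ) (hv : |∑ t, a k t * v t| ≤ ζ)
    -- i.i.d. Rademacher signs
    (ε : Fin N → Ω → ℝ)
    (hmeas : ∀ i, Measurable (ε i))
    (hindep : iIndepFun ε P)
    (hdist : ∀ i, P {ω | ε i ω = 1} = 1 / 2 ∧ P {ω | ε i ω = -1} = 1 / 2)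
    (p : ℝ) (hp : 0 < p) :
    P {ω | p < |ε k ω * ∑ t, a k t * ((∑ j ∈ Λ, ε j ω * x j * a j t) + v t)|} ≤
        ENNReal.ofReal (2 * Real.exp (-(p ^ 2) /
          (2 * ((∑ j ∈ Λ, x j ^ 2 * (∑ t, a k t * a j t) ^ 2) + ζ ^ 2)))) ∧
      P {ω | p < |ε k ω * ∑ t, a k t * ((∑ j ∈ Λ, ε j ω * x j * a j t) + v t)|} ≤
        ENNReal.ofReal (2 * Real.exp (-(p ^ 2) /
          (2 * (xmax ^ 2 * S * μ ^ 2 + ζ ^ 2)))) := by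
  set g : Fin N → ℝ := fun j => ∑ t, a k t * a j t
  set c := ∑ t, a k t * v t
  have hinner : ∀ ω, ∑ t, a k t * ((∑ j ∈ Λ, ε j ω * x j * a j t) + v t) =
      ∑ j ∈ Λ, ε j ω * (x j * g j) + c := fun ω => by
    simp only [g, c, mul_add, Finset.sum_add_distrib, Finset.mul_sum]
    rw [Finset.sum_comm]
    simp only [mul_left_comm, mul_assoc]
  have hW : HasSubgaussianMGF (fun ω => ∑ j ∈ Λ, ε j ω * (x j * g j))
      (∑ j ∈ Λ, ‖x j * g j‖₊ ^ 2) P :=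
    HasSubgaussianMGF.sum_of_iIndepFun (hindep.comp _ fun j => measurable_mul_const (x j * g j))
      fun j _ => IsRademacher.hasSubgaussianMGF_mul_const (hdist j) (hmeas j) _
  have hT := IsRademacher.hasSubgaussianMGF_mul_add_const (hdist k) (hmeas k) hW
    (hindep.indepFun_sum_mul_of_notMem hmeas hk _) c
  have hparam : ((∑ j ∈ Λ, ‖x j * g j‖₊ ^ 2 + ‖c‖₊ ^ 2 : ℝ≥0) : ℝ) ≤
      ∑ j ∈ Λ, x j ^ 2 * g j ^ 2 + ζ ^ 2 := by
    push_cast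
    simp only [norm_eq_abs, sq_abs, mul_pow]
    exact add_le_add_right (sq_le_sq' (neg_le_of_abs_le hv) (le_of_abs_le hv)) _
  have hcoherence : ∑ j ∈ Λ, x j ^ 2 * g j ^ 2 ≤ xmax ^ 2 * S * μ ^ 2 := by
    refine Λ.sum_sq_mul_sq_le_of_card_filter_ne_zero_le (fun j _ => hxmax j)
      (fun j hj => hμ k j fun hkj => hk (hkj ▸ hj)) ?_
    rwa [← Set.ncard_coe_finset, Finset.coe_filter]
  simp only [hinner]
  exact ⟨hT.measure_abs_gt_le_of_le hp.le hparam,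
    hT.measure_abs_gt_le_of_le hp.le (hparam.trans (by gcongr))⟩

/-- Rademacher concentration for a single off-support correlation:
for `k ∉ Λ` and `y = Σ_{j∈Λ} ε_j x_j a_j + v`, the probability that
`|⟨ε_k a_k, y⟩| > p` is at most
`2 exp(−p²/(2(Σ_{j∈Λ} x_j² ⟨a_k,a_j⟩² + ζ²)))`, and also at most
`2 exp(−p²/(2(|x_max|² S μ² + ζ²)))`. -/
theorem off_support_correlation_single
    {Ω : Type*} [MeasurableSpace Ω] (P : Measure Ω) [IsProbabilityMeasure P]
    (n N : ℕ)
    -- unit ℓ2-norm vectors `a_1, …, a_N ∈ ℝ^n`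
    (a : Fin N → Fin n → ℝ)
    (ha : ∀ j, ∑ t, a j t ^ 2 = 1)
    -- mutual coherence `μ`
    (μ : ℝ) (hμ0 : 0 ≤ μ)
    (hμ : ∀ i j, i ≠ j → |∑ t, a i t * a j t| ≤ μ)
    -- `x` supported on `Λ`, entries bounded in magnitude by `x_max`
    (Λ : Finset (Fin N)) (x : Fin N → ℝ)
    (hsupp : ∀ i, x i ≠ 0 → i ∈ Λ)
    (xmax : ℝ) (hxmax : ∀ i, |x i| ≤ xmax)
    -- the fixed off-support index `k`
    (k : Fin N) (hk : k ∉ Λ)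
    -- overlap bound at `k`
    (S : ℕ)
    (hS : Set.ncard {j | j ∈ Λ ∧ (∑ t, a k t * a j t) ≠ 0} ≤ S)
    -- noise
    (v : Fin n → ℝ) (ζ : ℝ) (hv : |∑ t, a k t * v t| ≤ ζ)
    -- i.i.d. Rademacher signs
    (ε : Fin N → Ω → ℝ)
    (hmeas : ∀ i, Measurable (ε i))
    (hindep : iIndepFun ε P)
    (hdist : ∀ i, P {ω | ε i ω = 1} = 1 / 2 ∧ P {ω | ε i ω = -1} = 1 / 2)
    (p : ℝ) (hp : 0 < p) :
    P {ω | p < |ε k ω * ∑ t, a k t * ((∑ j ∈ Λ, ε j ω * x j * a j t) + v t)|} ≤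
        ENNReal.ofReal (2 * Real.exp (-(p ^ 2) /
          (2 * ((∑ j ∈ Λ, x j ^ 2 * (∑ t, a k t * a j t) ^ 2) + ζ ^ 2)))) ∧
      P {ω | p < |ε k ω * ∑ t, a k t * ((∑ j ∈ Λ, ε j ω * x j * a j t) + v t)|} ≤
        ENNReal.ofReal (2 * Real.exp (-(p ^ 2) /
          (2 * (xmax ^ 2 * S * μ ^ 2 + ζ ^ 2)))) :=
  off_support_correlation_single_general P n N a μ hμ Λ x xmax hxmax k hk S hS v ζ hv ε hmeas hindep
    hdist p hp
end

section
/- Let a_1,…,a_N ∈ R^n be unit ℓ2-norm vectors with μ = max_{i≠j}|⟨a_i,a_j⟩|, let x ∈ R^N be supported on Λ with largest nonzero magnitude |x_max|, assume for every i ∈ Λ that |{j ∈ Λ : ⟨a_i, a_j⟩ ≠ 0}| ≤ S, and let v ∈ R^n satisfy |⟨a_i, v⟩| ≤ ζ for every i ∈ Λ. Let D be any diagonal sign matrix (diagonal entries ±1), let A_Λ and D_Λ denote the restrictions to the columns/indices in Λ, and set x̂_Λ = (A_Λ D_Λ)ᵀ (A_Λ D_Λ x_Λ + v). Then ‖ x̂_Λ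 − x_Λ ‖_∞ ≤ μ (S − 1) |x_max| + ζ. -/
/-- Deterministic stability bound on the support: for any fixed
diagonal sign matrix `D` with signs `ε`, the restriction to `Λ` of
`x̂ = (A_Λ D_Λ)ᵀ (A_Λ D_Λ x_Λ + v)` satisfies
`‖x̂_Λ − x_Λ‖_∞ ≤ μ (S − 1) |x_max| + ζ`, i.e. every entry of the difference on
`Λ` is bounded by `μ (S − 1) |x_max| + ζ`. -/
theorem on_support_stability_bound
    (n N : ℕ)
    -- unit ℓ2-norm vectors `a_1, …, a_N ∈ ℝ^n`
    (a : Fin N → Fin n → ℝ)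
    (ha : ∀ j, ∑ t, a j t ^ 2 = 1)
    -- mutual coherence `μ`
    (μ : ℝ) (hμ0 : 0 ≤ μ)
    (hμ : ∀ i j, i ≠ j → |∑ t, a i t * a j t| ≤ μ)
    -- `x` supported on `Λ`, entries bounded in magnitude by `x_max`
    (Λ : Finset (Fin N)) (x : Fin N → ℝ)
    (hsupp : ∀ i, x i ≠ 0 → i ∈ Λ)
    (xmax : ℝ) (hxmax : ∀ i, |x i| ≤ xmax)
    -- overlap bound on `Λ`
    (S : ℕ)
    (hS : ∀ i ∈ Λ, Set.ncard {j | j ∈ Λ ∧ (∑ t, a i t * a j t) ≠ 0} ≤ S)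
    -- noise
    (v : Fin n → ℝ) (ζ : ℝ) (hv : ∀ i ∈ Λ, |∑ t, a i t * v t| ≤ ζ)
    -- fixed diagonal sign matrix entries
    (ε : Fin N → ℝ) (hε : ∀ j, ε j = 1 ∨ ε j = -1) :
    ∀ i ∈ Λ, |ε i * (∑ t, a i t * ((∑ j ∈ Λ, ε j * x j * a j t) + v t)) - x i| ≤
      μ * ((S : ℝ) - 1) * xmax + ζ := by
  intro i hi
  set g : Fin N → Fin N → ℝ := fun i j => ∑ t, a i t * a j t with hg
  have hgii : g i i = 1 := by simpa [g, sq] using ha i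
  have habsε : ∀ j, |ε j| = 1 := fun j => by rcases hε j with h | h <;> simp [h]
  have hεi2 : ε i * ε i = 1 := by rcases hε i with h | h <;> simp [h] <;> ring
  have hxm0 : 0 ≤ xmax := le_trans (abs_nonneg _) (hxmax i)
  -- expand the inner product
  have key : (∑ t, a i t * ((∑ j ∈ Λ, ε j * x j * a j t) + v t))
      = (∑ j ∈ Λ, ε j * x j * g i j) + ∑ t, a i t * v t := by
    have h1 : ∀ t, a i t * ((∑ j ∈ Λ, ε j * x j * a j t) + v t)
        = (∑ j ∈ Λ, ε j * x j * (a i t * a j t)) + a i t * v t := by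
      intro t
      rw [mul_add, Finset.mul_sum]
      congr 1
      exact Finset.sum_congr rfl fun j _ => by ring
    simp only [h1, Finset.sum_add_distrib]
    congr 1
    rw [Finset.sum_comm]
    exact Finset.sum_congr rfl fun j _ => by rw [← Finset.mul_sum]
  have hsplit : ε i * (∑ t, a i t * ((∑ j ∈ Λ, ε j * x j * a j t) + v t)) - x i
      = (∑ j ∈ Λ.erase i, ε i * (ε j * x j * g i j)) + ε i * ∑ t, a i t * v t := by
    rw [key, mul_add, Finset.mul_sum, ← Finset.sum_erase_add Λ _ hi]
    have : ε i * (ε i * x i * g i i) = x i := by rw [hgii, mul_one, ← mul_assoc, hεi2, one_mul]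
    rw [this]; ring
  -- the filtered support set
  set F : Finset (Fin N) := Λ.filter (fun j => g i j ≠ 0) with hF
  have hcard : F.card ≤ S := by
    have h := hS i hi
    have hset : {j | j ∈ Λ ∧ (∑ t, a i t * a j t) ≠ 0} = ↑F := by
      ext j; simp [hF, g]
    rwa [hset, Set.ncard_coe_finset] at h
  have hiF : i ∈ F := Finset.mem_filter.2 ⟨hi, by rw [hgii]; norm_num⟩
  have hF1 : 1 ≤ F.card := Finset.card_pos.2 ⟨i, hiF⟩
  have hS1 : 1 ≤ S := le_trans hF1 hcard
  -- restrict sum to F.erase i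
  have hsum_eq : (∑ j ∈ Λ.erase i, ε i * (ε j * x j * g i j))
      = ∑ j ∈ F.erase i, ε i * (ε j * x j * g i j) := by
    refine (Finset.sum_subset (Finset.erase_subset_erase _ (Finset.filter_subset _ _)) ?_).symm
    intro j hj hjF
    have hjΛ : j ∈ Λ := Finset.mem_of_mem_erase hj
    have hjne : j ≠ i := Finset.ne_of_mem_erase hj
    have : g i j = 0 := by
      by_contra hgz
      exact hjF (Finset.mem_erase.2 ⟨hjne, Finset.mem_filter.2 ⟨hjΛ, hgz⟩⟩)
    simp [this]
  -- bound each term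
  have hterm : ∀ j ∈ F.erase i, |ε i * (ε j * x j * g i j)| ≤ μ * xmax := by
    intro j hj
    have hjne : j ≠ i := Finset.ne_of_mem_erase hj
    have hgb : |g i j| ≤ μ := hμ i j (fun h => hjne h.symm)
    calc |ε i * (ε j * x j * g i j)|
        = |ε i| * (|ε j| * (|x j| * |g i j|)) := by
          rw [abs_mul, abs_mul, abs_mul, mul_assoc]
      _ = |x j| * |g i j| := by rw [habsε i, habsε j]; ring
      _ ≤ xmax * μ := mul_le_mul (hxmax j) hgb (abs_nonneg _) hxm0
      _ = μ * xmax := by ring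
  have hsum_bound : |∑ j ∈ F.erase i, ε i * (ε j * x j * g i j)|
      ≤ ((F.erase i).card : ℝ) * (μ * xmax) := by
    calc |∑ j ∈ F.erase i, ε i * (ε j * x j * g i j)|
        ≤ ∑ j ∈ F.erase i, |ε i * (ε j * x j * g i j)| := Finset.abs_sum_le_sum_abs _ _
      _ ≤ ∑ j ∈ F.erase i, μ * xmax := Finset.sum_le_sum hterm
      _ = ((F.erase i).card : ℝ) * (μ * xmax) := by rw [Finset.sum_const, nsmul_eq_mul]
  have hcard_erase : ((F.erase i).card : ℝ) ≤ (S : ℝ) - 1 := by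
    rw [Finset.card_erase_of_mem hiF]
    have h2 : F.card - 1 ≤ S - 1 := Nat.sub_le_sub_right hcard 1
    have h3 : ((F.card - 1 : ℕ) : ℝ) ≤ ((S - 1 : ℕ) : ℝ) := by exact_mod_cast h2
    rw [Nat.cast_sub hS1] at h3
    simpa using h3
  have hnoise : |ε i * ∑ t, a i t * v t| ≤ ζ := by
    rw [abs_mul, habsε i, one_mul]; exact hv i hi
  calc |ε i * (∑ t, a i t * ((∑ j ∈ Λ, ε j * x j * a j t) + v t)) - x i|
      = |(∑ j ∈ F.erase i, ε i * (ε j * x j * g i j)) + ε i * ∑ t, a i t * v t| := by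
        rw [hsplit, hsum_eq]
    _ ≤ |∑ j ∈ F.erase i, ε i * (ε j * x j * g i j)| + |ε i * ∑ t, a i t * v t| :=
        abs_add_le _ _
    _ ≤ ((F.erase i).card : ℝ) * (μ * xmax) + ζ := add_le_add hsum_bound hnoise
    _ ≤ ((S : ℝ) - 1) * (μ * xmax) + ζ := by
        have : 0 ≤ μ * xmax := mul_nonneg hμ0 hxm0
        nlinarith [hcard_erase]
    _ = μ * ((S : ℝ) - 1) * xmax + ζ := by ring
end
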